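/- Let G be a finite connected simple graph with n ≥ 3 vertices. If G has a cut edge (an edge whose deletion disconnects G), then for any two distinct vertices u, v of G, Ω_G(u,v) > 2/n. -/

import Mathlib

/-! Write `L` for the Laplacian, `P = J / n` (`J` all ones) for the orthogonal projection
onto the constant vectors and `x = e_u - e_v`. Since `P` projects onto `ker L`,
`L⁺ = (L + P)⁻¹ - P`, and as `P x = 0` this gives `Ω(u,v) = xᵀ (L + P)⁻¹ x` with `L + P`
positive definite. Cauchy–Schwarz for the inner product defined by `L + P` gives
`(xᵀx)² ≤ (xᵀ L x) Ω(u,v)`, that is `Ω(u,v) ≥ 4 / (d_u + d_v + 2 a_uv)`. The denominator is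
less than `2n` unless `u` and `v` are both adjacent to all other vertices; but then, as
`n ≥ 3`, every edge lies in a triangle and none is a cut edge. -/

open Matrix Finset

/-- The Moore–Penrose pseudoinverse of a real square matrix, specified (when it exists)
by the four Penrose conditions. -/
noncomputable def pinv {n : Type*} [Fintype n] [DecidableEq n] (A : Matrix n n ℝ) :
    Matrix n n ℝ :=
  open scoped Classical in
  if h : ∃ B, A * B * A = A ∧ B * A * B = B ∧ (A * B)ᵀ = A * B ∧ (B * A)ᵀ = B * A
  then h.choose else 0

/-- The resistance distance between two vertices of a graph:
`Ω_G(i,j) = (e_i − e_j)ᵀ L⁺ (e_i − e_j)` where `L⁺` is the Moore–Penrose pseudoinverse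
of the Laplacian matrix of `G`. -/
noncomputable def resDist {V : Type*} [Fintype V] [DecidableEq V] (G : SimpleGraph V)
    (i j : V) : ℝ :=
  letI : DecidableRel G.Adj := Classical.decRel _
  (Pi.single i 1 - Pi.single j 1) ⬝ᵥ
    (pinv (G.lapMatrix ℝ)) *ᵥ (Pi.single i 1 - Pi.single j 1)

lemma resDist_comm {V : Type*} [Fintype V] [DecidableEq V] (G : SimpleGraph V) (i j : V) :
    resDist G i j = resDist G j i := by
  unfold resDist
  rw [show (Pi.single j 1 - Pi.single i 1 : V → ℝ)
        = -(Pi.single i 1 - Pi.single j 1) by rw [neg_sub]]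
  rw [Matrix.mulVec_neg, dotProduct_neg, neg_dotProduct, neg_neg]

/-- The global cyclicity index `C(G) = Σ_{ij ∈ E(G)} (1/Ω_G(i,j) − 1)`,
the sum over all edges of `G`. -/
noncomputable def cyclicity {V : Type*} [Fintype V] [DecidableEq V] (G : SimpleGraph V) : ℝ :=
  letI : DecidableRel G.Adj := Classical.decRel _
  ∑ e ∈ G.edgeFinset,
    Sym2.lift ⟨fun i j => 1 / resDist G i j - 1,
      fun i j => by simp only []; rw [resDist_comm G i j]⟩ e

namespace Matrix

variable {n : Type*} [Fintype n]

def IsMoorePenroseInverse (A B : Matrix n n ℝ) : Prop :=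
  A * B * A = A ∧ B * A * B = B ∧ (A * B)ᵀ = A * B ∧ (B * A)ᵀ = B * A

theorem IsMoorePenroseInverse.unique {A B C : Matrix n n ℝ} (hB : IsMoorePenroseInverse A B)
    (hC : IsMoorePenroseInverse A C) : B = C := by
  obtain ⟨hB1, hB2, hB3, hB4⟩ := hB
  obtain ⟨hC1, hC2, hC3, hC4⟩ := hC
  have hAB : A * B = A * C :=
    calc A * B = (A * C)ᵀ * (A * B)ᵀ := by rw [hC3, hB3, ← Matrix.mul_assoc, hC1]
      _ = A * C := by rw [← transpose_mul, ← Matrix.mul_assoc, hB1, hC3]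
  have hBA : B * A = C * A :=
    calc B * A = (B * A)ᵀ * (C * A)ᵀ := by
          rw [hB4, hC4, Matrix.mul_assoc, ← Matrix.mul_assoc A, hC1]
      _ = C * A := by rw [← transpose_mul, Matrix.mul_assoc, ← Matrix.mul_assoc A, hB1, hC4]
  calc B = B * A * B := hB2.symm
    _ = C * A * C := by rw [hBA, Matrix.mul_assoc, hAB, ← Matrix.mul_assoc]
    _ = C := hC2

theorem PosSemidef.sq_dotProduct_mulVec_le {A : Matrix n n ℝ} (hA : A.PosSemidef) (x y : n → ℝ) :
    (x ⬝ᵥ A *ᵥ y) ^ 2 ≤ (x ⬝ᵥ A *ᵥ x) * (y ⬝ᵥ A *ᵥ y) := by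
  let := A.toSeminormedAddCommGroup hA
  let := A.toInnerProductSpace hA
  have h := real_inner_mul_inner_self_le x y
  change ((A *ᵥ y) ⬝ᵥ star x) * ((A *ᵥ y) ⬝ᵥ star x) ≤
    ((A *ᵥ x) ⬝ᵥ star x) * ((A *ᵥ y) ⬝ᵥ star y) at h
  simpa [star_trivial, dotProduct_comm, sq] using h

noncomputable def constProj (n : Type*) [Fintype n] : Matrix n n ℝ :=
  of fun _ _ => (Fintype.card n : ℝ)⁻¹

theorem constProj_mulVec (x : n → ℝ) :
    constProj n *ᵥ x = fun _ => (Fintype.card n : ℝ)⁻¹ * ∑ i, x i := by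
  ext; simp [constProj, mulVec, dotProduct, Finset.mul_sum]

theorem transpose_constProj : (constProj n)ᵀ = constProj n := rfl

theorem constProj_mul_self [Nonempty n] : constProj n * constProj n = constProj n := by
  ext i j
  simp [constProj, Matrix.mul_apply]

theorem dotProduct_constProj_mulVec (x : n → ℝ) :
    x ⬝ᵥ constProj n *ᵥ x = (Fintype.card n : ℝ)⁻¹ * (∑ i, x i) ^ 2 := by
  simp only [constProj_mulVec, dotProduct, ← Finset.sum_mul]
  ring

variable [DecidableEq n]

theorem pinv_eq_of_isMoorePenroseInverse {A B : Matrix n n ℝ} (hB : IsMoorePenroseInverse A B) :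
    pinv A = B :=
  have hex : ∃ C, IsMoorePenroseInverse A C := ⟨B, hB⟩
  (dif_pos hex).trans (hex.choose_spec.unique hB)

/-- Typically `P` is the orthogonal projection onto the kernel of `A`. -/
theorem isMoorePenroseInverse_inv_add_sub {A P : Matrix n n ℝ} (hA : Aᵀ = A) (hP : Pᵀ = P)
    (hPP : P * P = P) (hAP : A * P = 0) (hunit : IsUnit (A + P)) :
    IsMoorePenroseInverse A ((A + P)⁻¹ - P) := by
  have hdet : IsUnit (A + P).det := (isUnit_iff_isUnit_det _).mp hunit
  set M := A + P with hM
  have hPA : P * A = 0 := by rw [← hA, ← hP, ← transpose_mul, hAP, transpose_zero]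
  have hPM : P * M = P := by rw [hM, Matrix.mul_add, hPA, hPP, zero_add]
  have hMP : M * P = P := by rw [hM, Matrix.add_mul, hAP, hPP, zero_add]
  have hPMinv : P * M⁻¹ = P := by
    rw [← hPM, Matrix.mul_assoc, mul_nonsing_inv M hdet, Matrix.mul_one, hPM]
  have hMinvP : M⁻¹ * P = P := by
    rw [← hMP, ← Matrix.mul_assoc, nonsing_inv_mul M hdet, Matrix.one_mul, hMP]
  have hAM : A = M - P := (add_sub_cancel_right A P).symm
  have hAB : A * (M⁻¹ - P) = 1 - P := by
    rw [hAM, Matrix.sub_mul, Matrix.mul_sub, Matrix.mul_sub, mul_nonsing_inv M hdet, hMP,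
      hPMinv, hPP]
    abel
  have hBA : (M⁻¹ - P) * A = 1 - P := by
    rw [hAM, Matrix.sub_mul, Matrix.mul_sub, Matrix.mul_sub, nonsing_inv_mul M hdet, hMinvP,
      hPM, hPP]
    abel
  refine ⟨?_, ?_, ?_, ?_⟩
  · rw [hAB, Matrix.sub_mul, Matrix.one_mul, hPA, sub_zero]
  · rw [hBA, Matrix.sub_mul, Matrix.one_mul, Matrix.mul_sub, hPMinv, hPP, sub_self, sub_zero]
  · rw [hAB, transpose_sub, transpose_one, hP]
  · rw [hBA, transpose_sub, transpose_one, hP]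

theorem PosDef.sq_dotProduct_le_mul_inv {A : Matrix n n ℝ} (hA : A.PosDef) (x : n → ℝ) :
    (x ⬝ᵥ x) ^ 2 ≤ (x ⬝ᵥ A *ᵥ x) * (x ⬝ᵥ A⁻¹ *ᵥ x) := by
  have hdet : IsUnit A.det := (isUnit_iff_isUnit_det _).mp hA.isUnit
  have hAy : A *ᵥ (A⁻¹ *ᵥ x) = x := by rw [mulVec_mulVec, mul_nonsing_inv A hdet, one_mulVec]
  have h := hA.posSemidef.sq_dotProduct_mulVec_le x (A⁻¹ *ᵥ x)
  rwa [hAy, dotProduct_comm (A⁻¹ *ᵥ x)] at h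

end Matrix

namespace SimpleGraph

variable {V : Type*} (G : SimpleGraph V)

theorem not_isBridge_of_adj_of_adj {a b t : V} (hat : G.Adj a t) (htb : G.Adj t b) :
    ¬ G.IsBridge s(a, b) := by
  rw [isBridge_iff_forall_walk_mem_edges]
  intro h
  have := h (.cons hat (.cons htb .nil))
  simp only [Walk.edges_cons, Walk.edges_nil, List.mem_cons, Sym2.eq_iff, List.not_mem_nil] at this
  grind [hat.ne, htb.ne]

theorem not_isBridge_of_isUniversal [Fintype V] (hcard : 3 ≤ Fintype.card V) {u v : V}
    (huv : u ≠ v) (hu : G.IsUniversal u) (hv : G.IsUniversal v) (e : Sym2 V) :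
    ¬ G.IsBridge e := by
  induction e using Sym2.ind with | _ a b => ?_
  by_cases hab : a = b
  · subst hab
    exact fun h => h (Reachable.refl a)
  suffices ∃ t, G.Adj a t ∧ G.Adj t b from
    let ⟨t, hat, htb⟩ := this; G.not_isBridge_of_adj_of_adj hat htb
  by_cases h : ∃ z, G.IsUniversal z ∧ z ≠ a ∧ z ≠ b
  · obtain ⟨z, hz, hza, hzb⟩ := h
    exact ⟨z, (hz hza).symm, hz hzb⟩
  · have hmem : ∀ z, G.IsUniversal z → z = a ∨ z = b := by grind
    obtain ⟨ha, hb⟩ : G.IsUniversal a ∧ G.IsUniversal b := by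
      rcases hmem u hu with rfl | rfl <;> rcases hmem v hv with rfl | rfl <;> tauto
    obtain ⟨t, hta, htb⟩ := ENat.exists_ne_ne_of_three_le
      (by simpa [ENat.card_eq_coe_fintype_card] using hcard) a b
    exact ⟨t, ha hta.symm, (hb htb.symm).symm⟩

variable [Fintype V] [DecidableRel G.Adj]

theorem degree_add_degree_add_lt_of_isBridge (hcard : 3 ≤ Fintype.card V)
    (hbridge : ∃ e, G.IsBridge e) {u v : V} (huv : u ≠ v) :
    G.degree u + G.degree v + 2 * (if G.Adj u v then 1 else 0) < 2 * Fintype.card V := by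
  by_contra! h
  have hu := G.degree_lt_card_verts u
  have hv := G.degree_lt_card_verts v
  have hfull : G.degree u = Fintype.card V - 1 ∧ G.degree v = Fintype.card V - 1 := by
    split_ifs at h <;> omega
  obtain ⟨e, he⟩ := hbridge
  exact G.not_isBridge_of_isUniversal hcard huv ((G.degree_eq_card_sub_one u).mp hfull.1)
    ((G.degree_eq_card_sub_one v).mp hfull.2) e he

variable [DecidableEq V]

open Matrix

theorem dotProduct_lapMatrix_mulVec_single_sub_single {u v : V} (huv : u ≠ v) :
    (Pi.single u 1 - Pi.single v 1) ⬝ᵥ G.lapMatrix ℝ *ᵥ (Pi.single u 1 - Pi.single v 1) =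
      G.degree u + G.degree v + 2 * (if G.Adj u v then 1 else 0) := by
  simp only [lapMatrix, degMatrix, mulVec_sub, mulVec_single, MulOpposite.op_one, one_smul,
    dotProduct_sub, sub_dotProduct, single_dotProduct, col_apply, Matrix.sub_apply,
    diagonal_apply_eq, adjMatrix_apply, SimpleGraph.irrefl, ↓reduceIte, sub_zero, one_mul, ne_eq,
    huv.symm, not_false_eq_true, diagonal_apply_ne, G.adj_comm v u, zero_sub, mul_neg, mul_ite,
    mul_one, mul_zero, sub_neg_eq_add, huv]
  split_ifs <;> ring

theorem lapMatrix_mul_constProj : G.lapMatrix ℝ * constProj V = 0 := by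
  ext i j
  have := congrFun (G.lapMatrix_mulVec_const_eq_zero (R := ℝ)) i
  simp_all [constProj, Matrix.mul_apply, mulVec, dotProduct, ← Finset.sum_mul]

theorem posDef_lapMatrix_add_constProj (hG : G.Connected) :
    (G.lapMatrix ℝ + constProj V).PosDef := by
  have hL := G.posSemidef_lapMatrix ℝ
  have hP : (constProj V).IsHermitian := by
    rw [IsHermitian, conjTranspose_eq_transpose_of_trivial, transpose_constProj]
  refine .of_dotProduct_mulVec_pos (hL.isHermitian.add hP) fun x hx => ?_
  rw [star_trivial, add_mulVec, dotProduct_add, dotProduct_constProj_mulVec]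
  have hLx : 0 ≤ x ⬝ᵥ G.lapMatrix ℝ *ᵥ x := by simpa using hL.dotProduct_mulVec_nonneg x
  rcases hLx.lt_or_eq with hpos | hzero
  · positivity
  · have hconst : ∀ i j, x i = x j := fun i j =>
      (G.lapMatrix_toLinearMap₂'_apply'_eq_zero_iff_forall_reachable x).mp
        (by rw [toLinearMap₂'_apply']; exact hzero.symm) i j (hG.preconnected i j)
    obtain ⟨i⟩ := hG.nonempty
    have hxi : x i ≠ 0 := fun h => hx (funext fun j => (hconst j i).trans h)
    have hsum : ∑ j, x j = Fintype.card V * x i := by simp [hconst _ i]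
    rw [← hzero, hsum]
    have : (0 : ℝ) < Fintype.card V := by simp [Fintype.card_pos_iff.mpr hG.nonempty]
    positivity

theorem pinv_lapMatrix (hG : G.Connected) :
    pinv (G.lapMatrix ℝ) = (G.lapMatrix ℝ + constProj V)⁻¹ - constProj V :=
  have := hG.nonempty
  pinv_eq_of_isMoorePenroseInverse <| isMoorePenroseInverse_inv_add_sub (G.isSymm_lapMatrix ℝ)
    transpose_constProj constProj_mul_self G.lapMatrix_mul_constProj
    (G.posDef_lapMatrix_add_constProj hG).isUnit

theorem resDist_eq_dotProduct_inv (hG : G.Connected) (u v : V) :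
    resDist G u v = (Pi.single u 1 - Pi.single v 1) ⬝ᵥ
      (G.lapMatrix ℝ + constProj V)⁻¹ *ᵥ (Pi.single u 1 - Pi.single v 1) := by
  have hP : constProj V *ᵥ (Pi.single u 1 - Pi.single v 1) = 0 := by
    ext; simp [constProj_mulVec, Finset.sum_sub_distrib]
  -- `resDist` is defined through the classical `DecidableRel G.Adj` instance
  rw [resDist, @pinv_lapMatrix _ G _ (_) _ hG, sub_mulVec, hP, sub_zero]
  congr!

theorem four_le_mul_resDist (hG : G.Connected) {u v : V} (huv : u ≠ v) :
    4 ≤ (G.degree u + G.degree v + 2 * (if G.Adj u v then 1 else 0)) * resDist G u v := by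
  set x : V → ℝ := Pi.single u 1 - Pi.single v 1
  have hAx : x ⬝ᵥ (G.lapMatrix ℝ + constProj V) *ᵥ x = x ⬝ᵥ G.lapMatrix ℝ *ᵥ x := by
    simp [x, add_mulVec, constProj_mulVec, Finset.sum_sub_distrib]
  have hxx : x ⬝ᵥ x = 2 := by norm_num [x, huv, huv.symm]
  calc (4 : ℝ) = (x ⬝ᵥ x) ^ 2 := by rw [hxx]; norm_num
    _ ≤ _ := (G.posDef_lapMatrix_add_constProj hG).sq_dotProduct_le_mul_inv x
    _ = _ := by
      rw [hAx, G.dotProduct_lapMatrix_mulVec_single_sub_single huv,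
        G.resDist_eq_dotProduct_inv hG]

end SimpleGraph

theorem stmt13 {V : Type*} [Fintype V] [DecidableEq V] (G : SimpleGraph V)
    (hG : G.Connected) (hcard : 3 ≤ Fintype.card V) (hbridge : ∃ e, e ∈ G.edgeSet ∧ G.IsBridge e) :
    ∀ u v : V, u ≠ v → 2 / (Fintype.card V : ℝ) < resDist G u v := by
  intro u v huv
  classical
  obtain ⟨e, -, he⟩ := hbridge
  have hdeg := G.degree_add_degree_add_lt_of_isBridge hcard ⟨e, he⟩ huv
  have hmul := G.four_le_mul_resDist hG huv
  set q : ℝ := G.degree u + G.degree v + 2 * (if G.Adj u v then 1 else 0)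
  have hq : q < 2 * Fintype.card V := by
    simp only [q]
    split_ifs at hdeg ⊢ <;> exact_mod_cast hdeg
  have hq0 : 0 ≤ q := by positivity
  rw [div_lt_iff₀ (by positivity)]
  nlinarith
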